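/- arXiv:1801.02040 — 4 statements merged into one kernel-verified Lean document; each statement's English description precedes it below -/
import Mathlib

section
/- Let p ≥ 7 be prime and λ ∈ ℂ. If a = (a₁,a₂,a₃,a₄) and b = (b₁,b₂,b₃,b₄) in ℂ⁴ satisfy that ⟨a,b⟩ is the zero polynomial, then aᵢ·bᵢ = 0 for every i ∈ {1,2,3,4}. -/
open MvPolynomial Matrix

noncomputable def fpol (p : ℕ) (lam : ℂ) : MvPolynomial (Fin 4) ℂ :=
  X 0 ^ p + X 1 ^ p + X 2 ^ p + X 3 ^ p +
    C lam * (X 0 ^ 2 * X 1 ^ (p - 4) * X 2 ^ 2 + X 0 ^ 4 * X 1 ^ (p - 6) * X 3 ^ 2)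

noncomputable def substM (M : Matrix (Fin 4) (Fin 4) ℂ) (f : MvPolynomial (Fin 4) ℂ) :
    MvPolynomial (Fin 4) ℂ :=
  aeval (fun i => ∑ j, C (M i j) * X j) f

/-- The pairing `⟨u,v⟩ = Σ_{i,j} (∂²f/∂xᵢ∂xⱼ)·uᵢ·vⱼ`. -/
noncomputable def pairing (p : ℕ) (lam : ℂ) (u v : Fin 4 → ℂ) : MvPolynomial (Fin 4) ℂ :=
  ∑ i : Fin 4, ∑ j : Fin 4, pderiv i (pderiv j (fpol p lam)) * C (u i) * C (v j)

lemma pderiv_nat' (i : Fin 4) (n : ℕ) : pderiv i ((n : MvPolynomial (Fin 4) ℂ)) = 0 := by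
  rw [← map_natCast (C : ℂ →+* MvPolynomial (Fin 4) ℂ)]; exact pderiv_C

lemma pderiv_seven' (i : Fin 4) : pderiv i ((7 : MvPolynomial (Fin 4) ℂ)) = 0 := by
  rw [← map_ofNat (C : ℂ →+* MvPolynomial (Fin 4) ℂ) 7]; exact pderiv_C

set_option maxHeartbeats 8000000 in
theorem stmt7 (p : ℕ) (hp : p.Prime) (hp7 : 7 ≤ p) (lam : ℂ)
    (a b : Fin 4 → ℂ) (hab : pairing p lam a b = 0) :
    ∀ i : Fin 4, a i * b i = 0 := by
  obtain ⟨k, rfl⟩ : ∃ k, p = k + 7 := ⟨p - 7, by omega⟩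
  have e1 : k + 7 - 4 = k + 3 := rfl
  have e2 : k + 7 - 6 = k + 1 := rfl
  have e3 : k + 7 - 1 = k + 6 := rfl
  have e4 : k + 6 - 1 = k + 5 := rfl
  have e5 : k + 3 - 1 = k + 2 := rfl
  have e6 : k + 2 - 1 = k + 1 := rfl
  have e7 : k + 1 - 1 = k := rfl
  have hk7 : ((k:ℂ) + 7) ≠ 0 := by
    exact_mod_cast (Nat.cast_ne_zero (R := ℂ)).2 (by omega : k + 7 ≠ 0)
  have hk6 : ((k:ℂ) + 6) ≠ 0 := by
    exact_mod_cast (Nat.cast_ne_zero (R := ℂ)).2 (by omega : k + 6 ≠ 0)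
  intro i
  fin_cases i <;>
  [have h := congrArg (eval (Pi.single (0:Fin 4) 1)) hab;
   have h := congrArg (eval (Pi.single (1:Fin 4) 1)) hab;
   have h := congrArg (eval (Pi.single (2:Fin 4) 1)) hab;
   have h := congrArg (eval (Pi.single (3:Fin 4) 1)) hab] <;>
  · simp [pairing, fpol, e1, e2, e3, e4, e5, e6, e7, pderiv_pow, pderiv_mul, pderiv_C_mul,
      pderiv_nat', pderiv_seven', Pi.single_apply, Fin.sum_univ_four,
      zero_pow (by omega : k + 6 ≠ 0), zero_pow (by omega : k + 5 ≠ 0),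
      zero_pow (by omega : k + 3 ≠ 0), zero_pow (by omega : k + 2 ≠ 0),
      zero_pow (by omega : k + 1 ≠ 0)] at h
    rcases h with ((h | h) | h) | h
    · exact absurd h hk7
    · exact absurd h hk6
    · simp [h]
    · simp [h]
end

section
/- Let p ≥ 7 be prime and let λ ∈ ℂ be nonzero. If a, b ∈ ℂ⁴ are nonzero vectors such that ⟨a,b⟩ is the zero polynomial, then there exist nonzero scalars μ, ν ∈ ℂ such that either a = μ·e₃ and b = ν·e₄, or a = μ·e₄ and b = ν·e₃. -/
open MvPolynomial Matrix

/-- The standard basis vectors of `ℂ⁴`. -/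
noncomputable def stdBasis (i : Fin 4) : Fin 4 → ℂ := Pi.single i 1


set_option maxHeartbeats 1000000 in
theorem pairing_eq2 (q : ℕ) (lam : ℂ) (a b : Fin 4 → ℂ) :
    pairing (q+7) lam a b =
      C ((((q+7)*(q+6):ℕ):ℂ) * (a 0 * b 0)) * X 0 ^ (q+5) * X 1 ^ 0 * X 2 ^ 0 * X 3 ^ 0
    + C ((((q+7)*(q+6):ℕ):ℂ) * (a 1 * b 1)) * X 0 ^ 0 * X 1 ^ (q+5) * X 2 ^ 0 * X 3 ^ 0
    + C ((((q+7)*(q+6):ℕ):ℂ) * (a 2 * b 2)) * X 0 ^ 0 * X 1 ^ 0 * X 2 ^ (q+5) * X 3 ^ 0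
    + C ((((q+7)*(q+6):ℕ):ℂ) * (a 3 * b 3)) * X 0 ^ 0 * X 1 ^ 0 * X 2 ^ 0 * X 3 ^ (q+5)
    + C (lam * 2 * (a 0 * b 0)) * X 0 ^ 0 * X 1 ^ (q+3) * X 2 ^ 2 * X 3 ^ 0
    + C (lam * 12 * (a 0 * b 0)) * X 0 ^ 2 * X 1 ^ (q+1) * X 2 ^ 0 * X 3 ^ 2
    + C (lam * ((2*(q+3):ℕ):ℂ) * (a 0 * b 1 + a 1 * b 0)) * X 0 ^ 1 * X 1 ^ (q+2) * X 2 ^ 2 * X 3 ^ 0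
    + C (lam * ((4*(q+1):ℕ):ℂ) * (a 0 * b 1 + a 1 * b 0)) * X 0 ^ 3 * X 1 ^ q * X 2 ^ 0 * X 3 ^ 2
    + C (lam * 4 * (a 0 * b 2 + a 2 * b 0)) * X 0 ^ 1 * X 1 ^ (q+3) * X 2 ^ 1 * X 3 ^ 0
    + C (lam * 8 * (a 0 * b 3 + a 3 * b 0)) * X 0 ^ 3 * X 1 ^ (q+1) * X 2 ^ 0 * X 3 ^ 1
    + C (lam * (((q+3)*(q+2):ℕ):ℂ) * (a 1 * b 1)) * X 0 ^ 2 * X 1 ^ (q+1) * X 2 ^ 2 * X 3 ^ 0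
    + C (lam * (((q+1)*q:ℕ):ℂ) * (a 1 * b 1)) * X 0 ^ 4 * X 1 ^ (q-1) * X 2 ^ 0 * X 3 ^ 2
    + C (lam * ((2*(q+3):ℕ):ℂ) * (a 1 * b 2 + a 2 * b 1)) * X 0 ^ 2 * X 1 ^ (q+2) * X 2 ^ 1 * X 3 ^ 0
    + C (lam * ((2*(q+1):ℕ):ℂ) * (a 1 * b 3 + a 3 * b 1)) * X 0 ^ 4 * X 1 ^ q * X 2 ^ 0 * X 3 ^ 1
    + C (lam * 2 * (a 2 * b 2)) * X 0 ^ 2 * X 1 ^ (q+3) * X 2 ^ 0 * X 3 ^ 0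
    + C (lam * 2 * (a 3 * b 3)) * X 0 ^ 4 * X 1 ^ (q+1) * X 2 ^ 0 * X 3 ^ 0 := by
  have h4 : q + 7 - 4 = q + 3 := by omega
  have h6 : q + 7 - 6 = q + 1 := by omega
  simp only [pairing, Fin.sum_univ_four]
  simp only [fpol, h4, h6, map_add, pderiv_mul, pderiv_pow, pderiv_C, pderiv_X,
    Derivation.map_natCast, Pi.single_apply]
  simp only [map_natCast, map_ofNat, _root_.map_mul]
  simp
  ring

theorem fs_eq (q1 q2 q3 q4 r1 r2 r3 r4 : ℕ) :
    (Finsupp.single (0:Fin 4) q1 + Finsupp.single 1 q2 + Finsupp.single 2 q3 + Finsupp.single 3 q4 =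
     Finsupp.single 0 r1 + Finsupp.single 1 r2 + Finsupp.single 2 r3 + Finsupp.single 3 r4) ↔
    (q1 = r1 ∧ q2 = r2 ∧ q3 = r3 ∧ q4 = r4) := by
  constructor
  · intro h
    have h0 := DFunLike.congr_fun h 0
    have h1 := DFunLike.congr_fun h 1
    have h2 := DFunLike.congr_fun h 2
    have h3 := DFunLike.congr_fun h 3
    simp [Finsupp.single_apply] at h0 h1 h2 h3
    exact ⟨h0, h1, h2, h3⟩
  · rintro ⟨rfl, rfl, rfl, rfl⟩; rfl

theorem stmt8 (p : ℕ) (hp : p.Prime) (hp7 : 7 ≤ p) (lam : ℂ) (hlam : lam ≠ 0)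
    (a b : Fin 4 → ℂ) (ha : a ≠ 0) (hb : b ≠ 0)
    (hab : pairing p lam a b = 0) :
    ∃ μ ν : ℂ, μ ≠ 0 ∧ ν ≠ 0 ∧
      ((a = μ • stdBasis 2 ∧ b = ν • stdBasis 3) ∨
       (a = μ • stdBasis 3 ∧ b = ν • stdBasis 2)) := by
  obtain ⟨q, rfl⟩ : ∃ q, p = q + 7 := ⟨p - 7, by omega⟩
  rw [pairing_eq2] at hab
  have c7 : ((q:ℂ)+7) ≠ 0 := by exact_mod_cast (by omega : (q:ℕ)+7 ≠ 0)
  have c6 : ((q:ℂ)+6) ≠ 0 := by exact_mod_cast (by omega : (q:ℕ)+6 ≠ 0)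
  have c3 : ((q:ℂ)+3) ≠ 0 := by exact_mod_cast (by omega : (q:ℕ)+3 ≠ 0)
  have c1 : ((q:ℂ)+1) ≠ 0 := by exact_mod_cast (by omega : (q:ℕ)+1 ≠ 0)
  have e00X : True := trivial
  have e00 := congrArg (coeff (Finsupp.single (0:Fin 4) (q+5) + Finsupp.single 1 (0) +
      Finsupp.single 2 (0) + Finsupp.single 3 (0))) hab
  simp only [coeff_add, X_pow_eq_monomial, C_mul_monomial, monomial_mul, coeff_monomial,
    coeff_zero, fs_eq] at e00
  simp [hlam, c7, c6, c3, c1] at e00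
  have e11X : True := trivial
  have e11 := congrArg (coeff (Finsupp.single (0:Fin 4) (0) + Finsupp.single 1 (q+5) +
      Finsupp.single 2 (0) + Finsupp.single 3 (0))) hab
  simp only [coeff_add, X_pow_eq_monomial, C_mul_monomial, monomial_mul, coeff_monomial,
    coeff_zero, fs_eq] at e11
  simp [hlam, c7, c6, c3, c1] at e11
  have e22X : True := trivial
  have e22 := congrArg (coeff (Finsupp.single (0:Fin 4) (0) + Finsupp.single 1 (0) +
      Finsupp.single 2 (q+5) + Finsupp.single 3 (0))) hab
  simp only [coeff_add, X_pow_eq_monomial, C_mul_monomial, monomial_mul, coeff_monomial,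
    coeff_zero, fs_eq] at e22
  simp [hlam, c7, c6, c3, c1] at e22
  have e33X : True := trivial
  have e33 := congrArg (coeff (Finsupp.single (0:Fin 4) (0) + Finsupp.single 1 (0) +
      Finsupp.single 2 (0) + Finsupp.single 3 (q+5))) hab
  simp only [coeff_add, X_pow_eq_monomial, C_mul_monomial, monomial_mul, coeff_monomial,
    coeff_zero, fs_eq] at e33
  simp [hlam, c7, c6, c3, c1] at e33
  have e01X : True := trivial
  have e01 := congrArg (coeff (Finsupp.single (0:Fin 4) (1) + Finsupp.single 1 (q+2) +
      Finsupp.single 2 (2) + Finsupp.single 3 (0))) hab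
  simp only [coeff_add, X_pow_eq_monomial, C_mul_monomial, monomial_mul, coeff_monomial,
    coeff_zero, fs_eq] at e01
  simp [hlam, c7, c6, c3, c1] at e01
  have e02X : True := trivial
  have e02 := congrArg (coeff (Finsupp.single (0:Fin 4) (1) + Finsupp.single 1 (q+3) +
      Finsupp.single 2 (1) + Finsupp.single 3 (0))) hab
  simp only [coeff_add, X_pow_eq_monomial, C_mul_monomial, monomial_mul, coeff_monomial,
    coeff_zero, fs_eq] at e02
  simp [hlam, c7, c6, c3, c1] at e02
  have e03X : True := trivial
  have e03 := congrArg (coeff (Finsupp.single (0:Fin 4) (3) + Finsupp.single 1 (q+1) +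
      Finsupp.single 2 (0) + Finsupp.single 3 (1))) hab
  simp only [coeff_add, X_pow_eq_monomial, C_mul_monomial, monomial_mul, coeff_monomial,
    coeff_zero, fs_eq] at e03
  simp [hlam, c7, c6, c3, c1] at e03
  have e12X : True := trivial
  have e12 := congrArg (coeff (Finsupp.single (0:Fin 4) (2) + Finsupp.single 1 (q+2) +
      Finsupp.single 2 (1) + Finsupp.single 3 (0))) hab
  simp only [coeff_add, X_pow_eq_monomial, C_mul_monomial, monomial_mul, coeff_monomial,
    coeff_zero, fs_eq] at e12
  simp [hlam, c7, c6, c3, c1] at e12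
  have e13X : True := trivial
  have e13 := congrArg (coeff (Finsupp.single (0:Fin 4) (4) + Finsupp.single 1 (q) +
      Finsupp.single 2 (0) + Finsupp.single 3 (1))) hab
  simp only [coeff_add, X_pow_eq_monomial, C_mul_monomial, monomial_mul, coeff_monomial,
    coeff_zero, fs_eq] at e13
  simp [hlam, c7, c6, c3, c1] at e13
  clear hab
  have hzero : ∀ v : Fin 4 → ℂ, v 0 = 0 → v 1 = 0 → v 2 = 0 → v 3 = 0 → v = 0 := by
    intro v h0 h1 h2 h3; funext i; fin_cases i <;> assumption
  have ha0 : a 0 = 0 := by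
    by_contra h
    have hb0 : b 0 = 0 := e00.resolve_left h
    have hb1 : b 1 = 0 := by
      have h' : a 0 * b 1 = 0 := by linear_combination e01 - a 1 * hb0
      exact (mul_eq_zero.1 h').resolve_left h
    have hb2 : b 2 = 0 := by
      have h' : a 0 * b 2 = 0 := by linear_combination e02 - a 2 * hb0
      exact (mul_eq_zero.1 h').resolve_left h
    have hb3 : b 3 = 0 := by
      have h' : a 0 * b 3 = 0 := by linear_combination e03 - a 3 * hb0
      exact (mul_eq_zero.1 h').resolve_left h
    exact hb (hzero b hb0 hb1 hb2 hb3)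
  have hb0 : b 0 = 0 := by
    by_contra h
    have ha1 : a 1 = 0 := by
      have h' : a 1 * b 0 = 0 := by linear_combination e01 - b 1 * ha0
      exact (mul_eq_zero.1 h').resolve_right h
    have ha2 : a 2 = 0 := by
      have h' : a 2 * b 0 = 0 := by linear_combination e02 - b 2 * ha0
      exact (mul_eq_zero.1 h').resolve_right h
    have ha3 : a 3 = 0 := by
      have h' : a 3 * b 0 = 0 := by linear_combination e03 - b 3 * ha0
      exact (mul_eq_zero.1 h').resolve_right h
    exact ha (hzero a ha0 ha1 ha2 ha3)
  have ha1 : a 1 = 0 := by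
    by_contra h
    have hb1 : b 1 = 0 := e11.resolve_left h
    have hb2 : b 2 = 0 := by
      have h' : a 1 * b 2 = 0 := by linear_combination e12 - a 2 * hb1
      exact (mul_eq_zero.1 h').resolve_left h
    have hb3 : b 3 = 0 := by
      have h' : a 1 * b 3 = 0 := by linear_combination e13 - a 3 * hb1
      exact (mul_eq_zero.1 h').resolve_left h
    exact hb (hzero b hb0 hb1 hb2 hb3)
  have hb1 : b 1 = 0 := by
    by_contra h
    have ha2 : a 2 = 0 := by
      have h' : a 2 * b 1 = 0 := by linear_combination e12 - b 2 * ha1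
      exact (mul_eq_zero.1 h').resolve_right h
    have ha3 : a 3 = 0 := by
      have h' : a 3 * b 1 = 0 := by linear_combination e13 - b 3 * ha1
      exact (mul_eq_zero.1 h').resolve_right h
    exact ha (hzero a ha0 ha1 ha2 ha3)
  by_cases h2 : a 2 = 0
  · have ha3 : a 3 ≠ 0 := fun h3 => ha (hzero a ha0 ha1 h2 h3)
    have hb3 : b 3 = 0 := e33.resolve_left ha3
    have hb2 : b 2 ≠ 0 := fun h' => hb (hzero b hb0 hb1 h' hb3)
    refine ⟨a 3, b 2, ha3, hb2, Or.inr ⟨?_, ?_⟩⟩ <;>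
      · funext i; fin_cases i <;> simp [_root_.stdBasis, Pi.single_apply, ha0, ha1, h2, hb0, hb1, hb3]
  · have hb2 : b 2 = 0 := e22.resolve_left h2
    have hb3 : b 3 ≠ 0 := fun h' => hb (hzero b hb0 hb1 hb2 h')
    have ha3 : a 3 = 0 := e33.resolve_right hb3
    refine ⟨a 2, b 3, h2, hb3, Or.inl ⟨?_, ?_⟩⟩ <;>
      · funext i; fin_cases i <;> simp [_root_.stdBasis, Pi.single_apply, ha0, ha1, ha3, hb0, hb1, hb2]
end

section
/- Let p ≥ 7 be prime, let λ ∈ ℂ be nonzero, and let M = (M_{ij}) ∈ GL₄(ℂ) and α ∈ ℂ* satisfy f_λ(M·x) = α·f_λ(x) as polynomials. If moreover M·e₃ = e₃ and M⟨e₄⟩ = ⟨e₄⟩, then M₃₁ = M₄₁ = M₃₂ = M₄₂ = 0; in particular M maps the plane {x₃ = x₄ = 0} to itself. -/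
open MvPolynomial Matrix

/-- The coordinate line `⟨eᵢ⟩ = ℂ·eᵢ ⊆ ℂ⁴`. -/
noncomputable def line (i : Fin 4) : Submodule ℂ (Fin 4 → ℂ) :=
  Submodule.span ℂ {stdBasis i}

/-- The plane `{x₃ = x₄ = 0}`, i.e. the span of `e₁` and `e₂`. -/
noncomputable def plane12 : Submodule ℂ (Fin 4 → ℂ) :=
  Submodule.span ℂ {stdBasis 0, stdBasis 1}

/-! Restrict `f_λ(M x) = α f_λ(x)` to a line `x = a + t v` and compare the coefficients of `t`.
When `a` and `M a` have vanishing first coordinate, every `λ`-monomial contains `x₁²` and is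
`O(t²)`, so the linear coefficient of `f_λ(a + t v)` is `p ∑ᵢ vᵢ aᵢ^(p-1)`. For `a = e₃` (fixed by
`M`) or `a = e₄` (with `M e₄ = μ e₄`, `μ ≠ 0`) and `v = e₁, e₂` this reads
`p M_{kj} μ^(p-1) = α p δ_{jk} = 0`. The plane statement follows since `M` is injective. -/

theorem Polynomial.coeff_one_C_mul_X_add_C_pow {R : Type*} [CommSemiring R] (u w : R) (n : ℕ) :
    ((Polynomial.C u * Polynomial.X + Polynomial.C w) ^ n).coeff 1 = n * u * w ^ (n - 1) := by
  have h := Polynomial.coeff_derivative ((Polynomial.C u * Polynomial.X + Polynomial.C w) ^ n) 0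
  rw [zero_add, Nat.cast_zero, zero_add, mul_one] at h
  rw [← h, Polynomial.coeff_zero_eq_eval_zero]
  simp [Polynomial.derivative_pow]
  ring

noncomputable def linePoly {σ R : Type*} [CommSemiring R] (a v : σ → R) : σ → Polynomial R :=
  fun i => Polynomial.C (v i) * Polynomial.X + Polynomial.C (a i)

theorem linePoly_mulVec {σ R : Type*} [Fintype σ] [CommSemiring R] (M : Matrix σ σ R)
    (a v : σ → R) :
    (fun i => ∑ j, Polynomial.C (M i j) * linePoly a v j) = linePoly (M *ᵥ a) (M *ᵥ v) := by
  funext i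
  simp [linePoly, mulVec, dotProduct, mul_add, Finset.sum_add_distrib, Finset.sum_mul, mul_assoc]

theorem aeval_linePoly_substM (M : Matrix (Fin 4) (Fin 4) ℂ) (f : MvPolynomial (Fin 4) ℂ)
    (a v : Fin 4 → ℂ) :
    aeval (linePoly a v) (substM M f) = aeval (linePoly (M *ᵥ a) (M *ᵥ v)) f := by
  rw [substM, comp_aeval_apply, ← linePoly_mulVec]
  simp

theorem coeff_one_aeval_linePoly_fpol (p : ℕ) (lam : ℂ) {a : Fin 4 → ℂ} (v : Fin 4 → ℂ)
    (ha : a 0 = 0) :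
    (aeval (linePoly a v) (fpol p lam)).coeff 1 = p * ∑ i, v i * a i ^ (p - 1) := by
  set g := linePoly a v
  have hg0 : g 0 = Polynomial.C (v 0) * Polynomial.X := by simp [g, linePoly, ha]
  have hX2 : Polynomial.X ^ 2 ∣ g 0 ^ 2 := pow_dvd_pow_of_dvd (hg0 ▸ dvd_mul_left _ _) 2
  have hdvd : Polynomial.X ^ 2 ∣
      g 0 ^ 2 * g 1 ^ (p - 4) * g 2 ^ 2 + g 0 ^ 4 * g 1 ^ (p - 6) * g 3 ^ 2 :=
    dvd_add ((hX2.mul_right _).mul_right _)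
      (((hX2.trans (pow_dvd_pow _ (by norm_num))).mul_right _).mul_right _)
  have hlamTerm := (Polynomial.X_pow_dvd_iff.mp hdvd) 1 one_lt_two
  have hf : aeval g (fpol p lam) = g 0 ^ p + g 1 ^ p + g 2 ^ p + g 3 ^ p + Polynomial.C lam *
      (g 0 ^ 2 * g 1 ^ (p - 4) * g 2 ^ 2 + g 0 ^ 4 * g 1 ^ (p - 6) * g 3 ^ 2) := by
    simp [fpol, Polynomial.algebraMap_eq]
  rw [hf, Polynomial.coeff_add, Polynomial.coeff_C_mul, hlamTerm, mul_zero, add_zero]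
  simp only [Polynomial.coeff_add, g, linePoly, Polynomial.coeff_one_C_mul_X_add_C_pow,
    Fin.sum_univ_four]
  ring

theorem sum_mulVec_mul_pow_eq_of_substM_fpol {p : ℕ} (hp : p ≠ 0) {lam α : ℂ}
    {M : Matrix (Fin 4) (Fin 4) ℂ} (heq : substM M (fpol p lam) = C α * fpol p lam)
    {a : Fin 4 → ℂ} (v : Fin 4 → ℂ) (ha : a 0 = 0) (hMa : (M *ᵥ a) 0 = 0) :
    ∑ i, (M *ᵥ v) i * (M *ᵥ a) i ^ (p - 1) = α * ∑ i, v i * a i ^ (p - 1) := by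
  have h := congrArg (fun f => (aeval (linePoly a v) f).coeff 1) heq
  simp only [aeval_linePoly_substM, coeff_one_aeval_linePoly_fpol _ _ _ hMa, map_mul, aeval_C,
    Polynomial.algebraMap_eq, Polynomial.coeff_C_mul, coeff_one_aeval_linePoly_fpol _ _ _ ha] at h
  rw [mul_left_comm] at h
  exact mul_left_cancel₀ (Nat.cast_ne_zero.mpr hp) h

theorem sum_mul_single_pow {ι R : Type*} [Fintype ι] [DecidableEq ι] [CommSemiring R]
    (w : ι → R) (k : ι) (c : R) {n : ℕ} (hn : n ≠ 0) :
    ∑ i, w i * (Pi.single k c : ι → R) i ^ n = w k * c ^ n := by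
  rw [Fintype.sum_eq_single k fun i hi => by simp [Pi.single_eq_of_ne hi, hn], Pi.single_eq_same]

theorem apply_eq_zero_of_substM_fpol {p : ℕ} (hp : 2 ≤ p) {lam α : ℂ}
    {M : Matrix (Fin 4) (Fin 4) ℂ} (heq : substM M (fpol p lam) = C α * fpol p lam)
    {j k : Fin 4} (hk : k ≠ 0) (hjk : j ≠ k) {μ : ℂ} (hμ : μ ≠ 0)
    (hM : M *ᵥ Pi.single k 1 = μ • Pi.single k 1) : M k j = 0 := by
  have h := sum_mulVec_mul_pow_eq_of_substM_fpol (by omega) heq (Pi.single j 1)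
    (Pi.single_eq_of_ne hk.symm 1) (by simp [hM, hk.symm])
  rw [hM, ← Pi.single_smul', smul_eq_mul, mul_one, sum_mul_single_pow _ _ _ (by omega),
    sum_mul_single_pow _ _ _ (by omega), mulVec_single_one, Pi.single_eq_of_ne hjk.symm] at h
  simpa [hμ] using h

theorem Submodule.map_eq_of_map_le_of_injective {K V : Type*} [DivisionRing K] [AddCommGroup V]
    [Module K V] {W : Submodule K V} [FiniteDimensional K W] {f : V →ₗ[K] V}
    (hf : Function.Injective f) (h : W.map f ≤ W) : W.map f = W :=
  Submodule.eq_of_le_of_finrank_le h (Submodule.equivMapOfInjective f hf W).finrank_eq.le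

theorem exists_mulVec_single_eq_smul (M : GL (Fin 4) ℂ) {k : Fin 4}
    (h : Submodule.map (M : Matrix (Fin 4) (Fin 4) ℂ).mulVecLin (line k) = line k) :
    ∃ μ : ℂ, μ ≠ 0 ∧ (M : Matrix (Fin 4) (Fin 4) ℂ) *ᵥ Pi.single k 1 = μ • Pi.single k 1 := by
  have hmem : (M : Matrix (Fin 4) (Fin 4) ℂ) *ᵥ _root_.stdBasis k ∈ line k :=
    h ▸ Submodule.mem_map_of_mem (Submodule.mem_span_singleton_self _)
  obtain ⟨μ, hμ⟩ := Submodule.mem_span_singleton.mp hmem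
  refine ⟨μ, fun h0 => ?_, hμ.symm⟩
  have hinj := mulVec_injective_of_isUnit M.isUnit
  have := hinj (hμ.symm.trans (by rw [h0, zero_smul, mulVec_zero]))
  simpa [_root_.stdBasis] using congrFun this k

theorem mem_plane12_of_apply_eq_zero {w : Fin 4 → ℂ} (h2 : w 2 = 0) (h3 : w 3 = 0) :
    w ∈ plane12 :=
  Submodule.mem_span_pair.mpr ⟨w 0, w 1, by ext i; fin_cases i <;> simp [_root_.stdBasis, h2, h3]⟩

theorem map_plane12_eq (M : GL (Fin 4) ℂ)
    (h : (M : Matrix (Fin 4) (Fin 4) ℂ) 2 0 = 0 ∧ (M : Matrix (Fin 4) (Fin 4) ℂ) 3 0 = 0 ∧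
      (M : Matrix (Fin 4) (Fin 4) ℂ) 2 1 = 0 ∧ (M : Matrix (Fin 4) (Fin 4) ℂ) 3 1 = 0) :
    Submodule.map (M : Matrix (Fin 4) (Fin 4) ℂ).mulVecLin plane12 = plane12 := by
  obtain ⟨h20, h30, h21, h31⟩ := h
  refine Submodule.map_eq_of_map_le_of_injective (mulVec_injective_of_isUnit M.isUnit) ?_
  rw [plane12, Submodule.map_span, Submodule.span_le]
  rintro _ ⟨x, hx | hx, rfl⟩ <;> subst hx <;> apply mem_plane12_of_apply_eq_zero <;>
    simp [_root_.stdBasis, h20, h30, h21, h31]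

theorem stmt11_general (p : ℕ) (hp : p.Prime) (lam : ℂ)
    (M : GL (Fin 4) ℂ) (α : ℂ)
    (heq : substM (M : Matrix (Fin 4) (Fin 4) ℂ) (fpol p lam) = C α * fpol p lam)
    (he3 : (M : Matrix (Fin 4) (Fin 4) ℂ).mulVec (stdBasis 2) = stdBasis 2)
    (he4 : Submodule.map (M : Matrix (Fin 4) (Fin 4) ℂ).mulVecLin (line 3) = line 3) :
    ((M : Matrix (Fin 4) (Fin 4) ℂ) 2 0 = 0 ∧ (M : Matrix (Fin 4) (Fin 4) ℂ) 3 0 = 0 ∧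
     (M : Matrix (Fin 4) (Fin 4) ℂ) 2 1 = 0 ∧ (M : Matrix (Fin 4) (Fin 4) ℂ) 3 1 = 0) ∧
    Submodule.map (M : Matrix (Fin 4) (Fin 4) ℂ).mulVecLin plane12 = plane12 := by
  obtain ⟨μ, hμ, hM3⟩ := exists_mulVec_single_eq_smul M he4
  have hM2 : (M : Matrix (Fin 4) (Fin 4) ℂ) *ᵥ Pi.single 2 1 = (1 : ℂ) • Pi.single 2 1 := by
    rw [one_smul]
    exact he3
  have hcol : (M : Matrix (Fin 4) (Fin 4) ℂ) 2 0 = 0 ∧ (M : Matrix (Fin 4) (Fin 4) ℂ) 3 0 = 0 ∧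
      (M : Matrix (Fin 4) (Fin 4) ℂ) 2 1 = 0 ∧ (M : Matrix (Fin 4) (Fin 4) ℂ) 3 1 = 0 :=
    ⟨apply_eq_zero_of_substM_fpol hp.two_le heq (by decide) (by decide) one_ne_zero hM2,
      apply_eq_zero_of_substM_fpol hp.two_le heq (by decide) (by decide) hμ hM3,
      apply_eq_zero_of_substM_fpol hp.two_le heq (by decide) (by decide) one_ne_zero hM2,
      apply_eq_zero_of_substM_fpol hp.two_le heq (by decide) (by decide) hμ hM3⟩
  exact ⟨hcol, map_plane12_eq M hcol⟩

theorem stmt11 (p : ℕ) (hp : p.Prime) (hp7 : 7 ≤ p) (lam : ℂ) (hlam : lam ≠ 0)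
    (M : GL (Fin 4) ℂ) (α : ℂ) (hα : α ≠ 0)
    (heq : substM (M : Matrix (Fin 4) (Fin 4) ℂ) (fpol p lam) = C α * fpol p lam)
    (he3 : (M : Matrix (Fin 4) (Fin 4) ℂ).mulVec (stdBasis 2) = stdBasis 2)
    (he4 : Submodule.map (M : Matrix (Fin 4) (Fin 4) ℂ).mulVecLin (line 3) = line 3) :
    ((M : Matrix (Fin 4) (Fin 4) ℂ) 2 0 = 0 ∧ (M : Matrix (Fin 4) (Fin 4) ℂ) 3 0 = 0 ∧
     (M : Matrix (Fin 4) (Fin 4) ℂ) 2 1 = 0 ∧ (M : Matrix (Fin 4) (Fin 4) ℂ) 3 1 = 0) ∧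
    Submodule.map (M : Matrix (Fin 4) (Fin 4) ℂ).mulVecLin plane12 = plane12 :=
  stmt11_general p hp lam M α heq he3 he4
end

section
/- Let p ≥ 7 be prime and let λ ∈ ℂ be nonzero. Suppose M = diag(1, μ₂, μ₃, μ₄) is a diagonal matrix in GL₄(ℂ) and α ∈ ℂ* is such that f_λ(M·x) = α·f_λ(x) as polynomials. Then α = 1, μ₂^p = μ₃^p = μ₄^p = 1, and moreover μ₃ = μ₂² and μ₄ = μ₂³; that is, M = diag(1, μ, μ², μ³) for some p-th root of unity μ. -/
open MvPolynomial Matrix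

theorem stmt14 (p : ℕ) (hp : p.Prime) (hp7 : 7 ≤ p) (lam : ℂ) (hlam : lam ≠ 0)
    (μ₂ μ₃ μ₄ : ℂ) (hμ₂ : μ₂ ≠ 0) (hμ₃ : μ₃ ≠ 0) (hμ₄ : μ₄ ≠ 0)
    (α : ℂ) (hα : α ≠ 0)
    (heq : substM (Matrix.diagonal ![1, μ₂, μ₃, μ₄]) (fpol p lam) = C α * fpol p lam) :
    α = 1 ∧ μ₂ ^ p = 1 ∧ μ₃ ^ p = 1 ∧ μ₄ ^ p = 1 ∧ μ₃ = μ₂ ^ 2 ∧ μ₄ = μ₂ ^ 3 := by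
  have hp0 : p ≠ 0 := hp.ne_zero
  have hp4 : p - 4 ≠ 0 := by omega
  have hp6 : p - 6 ≠ 0 := by omega
  have hodd : Odd p := hp.odd_of_ne_two (by omega)
  have key : ∀ v : Fin 4 → ℂ,
      (v 0)^p + (μ₂ * v 1)^p + (μ₃ * v 2)^p + (μ₄ * v 3)^p
        + lam * ((v 0)^2 * (μ₂ * v 1)^(p-4) * (μ₃ * v 2)^2
          + (v 0)^4 * (μ₂ * v 1)^(p-6) * (μ₄ * v 3)^2)
      = α * ((v 0)^p + (v 1)^p + (v 2)^p + (v 3)^p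
        + lam * ((v 0)^2*(v 1)^(p-4)*(v 2)^2 + (v 0)^4*(v 1)^(p-6)*(v 3)^2)) := by
    intro v
    have h := congrArg (eval v) heq
    simpa [substM, fpol, Matrix.diagonal, Fin.sum_univ_four, mul_pow] using h
  have e0 := key ![1, 0, 0, 0]
  have e1 := key ![0, 1, 0, 0]
  have e2 := key ![0, 0, 1, 0]
  have e3 := key ![0, 0, 0, 1]
  have e4 := key ![1, 1, 1, 0]
  have e5 := key ![1, 1, 0, 1]
  simp [zero_pow hp0, zero_pow hp4, zero_pow hp6] at e0 e1 e2 e3 e4 e5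
  have hα1 : α = 1 := e0.symm
  subst hα1
  have h2 : μ₂ ^ p = 1 := e1
  have h3 : μ₃ ^ p = 1 := e2
  have h4 : μ₄ ^ p = 1 := e3
  have m3 : μ₂ ^ (p-4) * μ₃ ^ 2 = 1 := by
    have hc : lam * (μ₂ ^ (p-4) * μ₃ ^ 2) = lam * 1 := by
      rw [h2, h3] at e4; linear_combination e4
    exact mul_left_cancel₀ hlam hc
  have m4 : μ₂ ^ (p-6) * μ₄ ^ 2 = 1 := by
    have hc : lam * (μ₂ ^ (p-6) * μ₄ ^ 2) = lam * 1 := by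
      rw [h2, h4] at e5; linear_combination e5
    exact mul_left_cancel₀ hlam hc
  have q3 : μ₃ ^ 2 = μ₂ ^ 4 := by
    have h44 : 4 + (p-4) = p := by omega
    have : μ₂ ^ 4 * (μ₂ ^ (p-4) * μ₃ ^ 2) = μ₂ ^ 4 := by rw [m3, mul_one]
    rw [← mul_assoc, ← pow_add, h44, h2, one_mul] at this
    exact this
  have q4 : μ₄ ^ 2 = μ₂ ^ 6 := by
    have h66 : 6 + (p-6) = p := by omega
    have : μ₂ ^ 6 * (μ₂ ^ (p-6) * μ₄ ^ 2) = μ₂ ^ 6 := by rw [m4, mul_one]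
    rw [← mul_assoc, ← pow_add, h66, h2, one_mul] at this
    exact this
  have f3 : μ₃ = μ₂ ^ 2 := by
    have hz : (μ₃ - μ₂ ^ 2) * (μ₃ + μ₂ ^ 2) = 0 := by linear_combination q3
    rcases mul_eq_zero.1 hz with h | h
    · exact sub_eq_zero.1 h
    · exfalso
      have hμ : μ₃ = -(μ₂ ^ 2) := by linear_combination h
      have : (1 : ℂ) = -1 := by
        calc (1 : ℂ) = μ₃ ^ p := h3.symm
          _ = (-(μ₂ ^ 2)) ^ p := by rw [hμ]
          _ = -((μ₂ ^ 2) ^ p) := hodd.neg_pow _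
          _ = -((μ₂ ^ p) ^ 2) := by rw [← pow_mul, ← pow_mul, Nat.mul_comm]
          _ = -1 := by rw [h2]; norm_num
      norm_num at this
  have f4 : μ₄ = μ₂ ^ 3 := by
    have hz : (μ₄ - μ₂ ^ 3) * (μ₄ + μ₂ ^ 3) = 0 := by linear_combination q4
    rcases mul_eq_zero.1 hz with h | h
    · exact sub_eq_zero.1 h
    · exfalso
      have hμ : μ₄ = -(μ₂ ^ 3) := by linear_combination h
      have : (1 : ℂ) = -1 := by
        calc (1 : ℂ) = μ₄ ^ p := h4.symm
          _ = (-(μ₂ ^ 3)) ^ p := by rw [hμ]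
          _ = -((μ₂ ^ 3) ^ p) := hodd.neg_pow _
          _ = -((μ₂ ^ p) ^ 3) := by rw [← pow_mul, ← pow_mul, Nat.mul_comm]
          _ = -1 := by rw [h2]; norm_num
      norm_num at this
  exact ⟨rfl, h2, h3, h4, f3, f4⟩
end
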